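/- Let V and W be absolute matrix order unit spaces and let φ, ψ : V → W be completely |·|-preserving maps with φ completely orthogonal to ψ. Then φ + ψ is completely |·|-preserving: (φ+ψ)ₙ(|v|ₙ) = |(φ+ψ)ₙ(v)|ₙ for all v ∈ Mₙ(V), n ∈ ℕ. -/

import Mathlib

noncomputable section

open scoped Matrix.Norms.L2Operator

/-! ### The *-algebra 𝔉 of ∞×∞ complex matrices with finitely many nonzero entries -/

/-- `∞ × ∞` complex matrices (indexed by `ℕ × ℕ`). -/
abbrev FMat := ℕ → ℕ → ℂ

/-- The matrix has (at most) finitely many nonzero entries: it is supported in some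
`n × n` top-left block. -/
def IsFin (a : FMat) : Prop := ∃ n, ∀ i j, (n ≤ i ∨ n ≤ j) → a i j = 0

/-- Matrix multiplication in `𝔉` (the `tsum` is a finite sum for finitely supported
matrices). -/
def fmul (a b : FMat) : FMat := fun i k => ∑' j, a i j * b j k

/-- The involution (conjugate transpose) on `𝔉`. -/
def fstar (a : FMat) : FMat := fun i j => starRingEnd ℂ (a j i)

/-- The matrix unit `𝔢_{i,j}`. -/
def eUnit (i j : ℕ) : FMat := fun k l => if k = i ∧ l = j then 1 else 0

/-- `𝔍ₙ = Σ_{i<n} 𝔢_{i,i}`, the partial identities. -/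
def JMat (n : ℕ) : FMat := fun k l => if k = l ∧ k < n then 1 else 0

/-- `𝔎ₙ = Σ_{i<n} 𝔢_{i,n+i}`, used for `2×2`-block constructions. -/
def KMat (n : ℕ) : FMat := fun k l => if l = k + n ∧ k < n then 1 else 0

/-- The diagonal idempotent `Σ_{i ∈ s} 𝔢_{i,i}` associated to a finite set `s ⊂ ℕ`. -/
def finsetDiag (s : Finset ℕ) : FMat := fun k l => if k = l ∧ k ∈ s then 1 else 0

/-- The operator norm on `𝔉`: the supremum of the (C*-algebra) operator norms of the
finite top-left blocks (for a finitely supported matrix the blocks stabilize). -/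
def fnorm (a : FMat) : ℝ :=
  ⨆ n : ℕ, ‖(Matrix.of fun i j : Fin n => a i j : Matrix (Fin n) (Fin n) ℂ)‖

/-- The order `o(𝔞)` of a finitely supported matrix: the least `n` such that `𝔞` is
supported in the top-left `n × n` block. -/
def matOrd (a : FMat) : ℕ := sInf {n | ∀ i j, (n ≤ i ∨ n ≤ j) → a i j = 0}

/-- A local unitary in `𝔉`: `𝔞*𝔞 = 𝔍_{o(𝔞)} = 𝔞𝔞*`. -/
def IsLocalUnitary (a : FMat) : Prop :=
  IsFin a ∧ fmul (fstar a) a = JMat (matOrd a) ∧ fmul a (fstar a) = JMat (matOrd a)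

/-! ### Non-degenerate *-𝔉-bimodules -/

/-- A non-degenerate `*`-`𝔉`-bimodule structure on a complex vector space `V`:
left and right actions of (finitely supported) infinite matrices together with an
involution, compatible with each other and with the complex scalars, such that every
element is `𝔍ₙ·v·𝔍ₙ` for some `n`. -/
structure FBimod (V : Type*) [AddCommGroup V] [Module ℂ V] where
  lsmul : FMat → V → V
  rsmul : V → FMat → V
  star : V → V
  lsmul_add : ∀ a u v, lsmul a (u + v) = lsmul a u + lsmul a v
  rsmul_add : ∀ u v b, rsmul (u + v) b = rsmul u b + rsmul v b
  add_lsmul : ∀ a b v, IsFin a → IsFin b → lsmul (a + b) v = lsmul a v + lsmul b v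
  rsmul_add' : ∀ v a b, IsFin a → IsFin b → rsmul v (a + b) = rsmul v a + rsmul v b
  smul_lsmul : ∀ (c : ℂ) a v, IsFin a → lsmul (c • a) v = c • lsmul a v
  smul_rsmul : ∀ (c : ℂ) v a, IsFin a → rsmul v (c • a) = c • rsmul v a
  mul_lsmul : ∀ a b v, IsFin a → IsFin b → lsmul (fmul a b) v = lsmul a (lsmul b v)
  rsmul_mul : ∀ v a b, IsFin a → IsFin b → rsmul v (fmul a b) = rsmul (rsmul v a) b
  lsmul_rsmul : ∀ a v b, IsFin a → IsFin b → rsmul (lsmul a v) b = lsmul a (rsmul v b)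
  star_add : ∀ u v, star (u + v) = star u + star v
  star_star : ∀ v, star (star v) = v
  star_lsmul : ∀ a v, IsFin a → star (lsmul a v) = rsmul (star v) (fstar a)
  star_rsmul : ∀ v a, IsFin a → star (rsmul v a) = lsmul (fstar a) (star v)
  smul_compat : ∀ (c : ℂ) (n : ℕ) v, lsmul (JMat n) (rsmul v (JMat n)) = v →
    lsmul (c • JMat n) v = c • v
  nondeg : ∀ v, ∃ n, lsmul (JMat n) (rsmul v (JMat n)) = v

namespace FBimod

variable {V : Type*} [AddCommGroup V] [Module ℂ V] (M : FBimod V)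

/-- `𝔍ₙ 𝔳 𝔍ₙ`. -/
def cut (n : ℕ) (v : V) : V := M.lsmul (JMat n) (M.rsmul v (JMat n))

/-- The order `o(𝔳)`: the smallest `n` with `𝔍ₙ 𝔳 𝔍ₙ = 𝔳`. -/
def ord (v : V) : ℕ := sInf {n | M.cut n v = v}

/-- `𝔞* 𝔳 𝔞`. -/
def conj (a : FMat) (v : V) : V := M.lsmul (fstar a) (M.rsmul v a)

/-- `C` is a bimodule cone: consists of self-adjoint elements, is closed under
addition and under `𝔳 ↦ 𝔞*𝔳𝔞` for `𝔞 ∈ 𝔉`. -/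
def IsCone (C : Set V) : Prop :=
  (∀ v ∈ C, M.star v = v) ∧ (∀ u ∈ C, ∀ v ∈ C, u + v ∈ C) ∧
    (∀ v ∈ C, ∀ a : FMat, IsFin a → M.conj a v ∈ C)

/-- The cone `C` is proper: `C ∩ (−C) = {0}`. -/
def ConeProper (C : Set V) : Prop := ∀ v ∈ C, -v ∈ C → v = 0

/-- The cone `C` is Archimedean. -/
def ConeArch (C : Set V) : Prop :=
  ∀ u ∈ C, ∀ v : V, M.star v = v → (∀ k : ℝ, 0 < k → (k : ℂ) • u + v ∈ C) → v ∈ C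

/-- The cone `C` is generating. -/
def ConeGen (C : Set V) : Prop :=
  ∀ v : V, ∃ v₀ ∈ C, ∃ v₁ ∈ C, ∃ v₂ ∈ C, ∃ v₃ ∈ C,
    v = v₀ + Complex.I • v₁ - v₂ - Complex.I • v₃

/-- `(𝔳₁, 𝔳₂)ₙ⁺ = 𝔳₁ + 𝔎ₙ* 𝔳₂ 𝔎ₙ` (the diagonal `2×2`-block `diag(𝔳₁,𝔳₂)`). -/
def pairPlus (n : ℕ) (v₁ v₂ : V) : V :=
  v₁ + M.lsmul (fstar (KMat n)) (M.rsmul v₂ (KMat n))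

/-- `saₙ(𝔳) = 𝔍ₙ 𝔳 𝔎ₙ + 𝔎ₙ* 𝔳* 𝔍ₙ` (the off-diagonal `2×2`-block of `𝔳`). -/
def san (n : ℕ) (v : V) : V :=
  M.lsmul (JMat n) (M.rsmul v (KMat n)) +
    M.lsmul (fstar (KMat n)) (M.rsmul (M.star v) (JMat n))

/-- `𝔲` and `𝔳` are `𝔉`-independent: compressed onto disjoint diagonal blocks. -/
def FIndep (u v : V) : Prop :=
  ∃ I J : Finset ℕ, Disjoint I J ∧
    M.lsmul (finsetDiag I) (M.rsmul u (finsetDiag I)) = u ∧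
    M.lsmul (finsetDiag J) (M.rsmul v (finsetDiag J)) = v

/-- `(𝔙, C, abs)` is a non-degenerate absolutely ordered `𝔉`-bimodule
(Definition 18 of the paper). -/
structure IsAbsOrd (C : Set V) (abs : V → V) : Prop where
  cone : M.IsCone C
  abs_mem : ∀ v, abs v ∈ C
  ord_abs_le : ∀ v, M.ord (abs v) ≤ M.ord v
  abs_of_mem : ∀ v ∈ C, abs v = v
  pos_part : ∀ v, M.pairPlus (M.ord v) (abs (M.star v)) (abs v) + M.san (M.ord v) v ∈ C
  abs_smul_le : ∀ (a b : FMat), IsFin a → IsFin b → ∀ v,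
    (fnorm a : ℂ) • abs (M.rsmul (abs v) b) - abs (M.lsmul a (M.rsmul v b)) ∈ C
  indep_add : ∀ u v, M.FIndep u v → abs (u + v) = abs u + abs v
  absorb : ∀ u ∈ C, ∀ v ∈ C, ∀ w ∈ C, abs (u - v) = u + v → v - w ∈ C →
    abs (u - w) = u + w
  ortho_pm : ∀ u ∈ C, ∀ v ∈ C, ∀ w ∈ C, abs (u - v) = u + v → abs (u - w) = u + w →
    abs (u - abs (v + w)) = u + abs (v + w) ∧ abs (u - abs (v - w)) = u + abs (v - w)

/-- `eⁿ = Σ_{i<n} 𝔢_{i,0} 𝔢 𝔢_{0,i}` for an element `𝔢` of order `1`. -/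
def epow (e : V) (n : ℕ) : V :=
  ∑ i ∈ Finset.range n, M.lsmul (eUnit i 0) (M.rsmul e (eUnit 0 i))

/-- `𝔢` is a local order unit for `(𝔙, C)`. -/
def IsLocalOrderUnit (C : Set V) (e : V) : Prop :=
  e ∈ C ∧ M.cut 1 e = e ∧ ∀ v : V, M.cut 1 v = v → ∃ k : ℝ, 0 < k ∧
    M.pairPlus 1 ((k : ℂ) • e) ((k : ℂ) • e) + M.san 1 v ∈ C

/-- `(𝔙, C, 𝔢)` is a local `𝔉`-order unit bimodule. -/
def IsLocalUnitBimod (C : Set V) (e : V) : Prop :=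
  M.IsCone C ∧ ConeProper C ∧ M.ConeArch C ∧ M.IsLocalOrderUnit C e

/-- The norm associated to a local order unit:
`‖𝔳‖ = inf { k > 0 : (k𝔢^{o(𝔳)}, k𝔢^{o(𝔳)})⁺_{o(𝔳)} + sa_{o(𝔳)}(𝔳) ∈ C }`. -/
def lnorm (C : Set V) (e : V) (v : V) : ℝ :=
  sInf {k : ℝ | 0 < k ∧
    M.pairPlus (M.ord v) ((k : ℂ) • M.epow e (M.ord v)) ((k : ℂ) • M.epow e (M.ord v)) +
      M.san (M.ord v) v ∈ C}

/-- `𝔲 ⊥_∞ 𝔳` with respect to the local-order-unit norm. -/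
def PerpInf (C : Set V) (e : V) (u v : V) : Prop :=
  ∀ k₁ k₂ : ℝ, M.lnorm C e ((k₁ : ℂ) • u + (k₂ : ℂ) • v) =
    max (M.lnorm C e ((k₁ : ℂ) • u)) (M.lnorm C e ((k₂ : ℂ) • v))

end FBimod
/-! ### Matrices over a complex *-vector space -/

section MatrixLevel

variable {V : Type*} [AddCommGroup V] [Module ℂ V] [StarAddMonoid V] [StarModule ℂ V]

/-- Conjugate transpose of a rectangular matrix over a `*`-vector space. -/
def mstar {m n : ℕ} (v : Matrix (Fin m) (Fin n) V) : Matrix (Fin n) (Fin m) V :=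
  fun i j => star (v j i)

/-- Left action of a scalar matrix: `(a v)_{ij} = Σ_k a_{ik} v_{kj}`. -/
def aSmul {r m n : ℕ} (a : Matrix (Fin r) (Fin m) ℂ) (v : Matrix (Fin m) (Fin n) V) :
    Matrix (Fin r) (Fin n) V :=
  fun i j => ∑ k, a i k • v k j

/-- Right action of a scalar matrix: `(v b)_{ij} = Σ_k b_{kj} • v_{ik}`. -/
def smulB {m n s : ℕ} (v : Matrix (Fin m) (Fin n) V) (b : Matrix (Fin n) (Fin s) ℂ) :
    Matrix (Fin m) (Fin s) V :=
  fun i j => ∑ k, b k j • v i k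

/-- Direct sum (block diagonal) of rectangular matrices over `V`. -/
def dsum {m n r s : ℕ} (v : Matrix (Fin m) (Fin n) V) (w : Matrix (Fin r) (Fin s) V) :
    Matrix (Fin (m + r)) (Fin (n + s)) V :=
  fun i j =>
    if hi : (i : ℕ) < m then
      (if hj : (j : ℕ) < n then v ⟨i, hi⟩ ⟨j, hj⟩ else 0)
    else
      (if hj : (j : ℕ) < n then 0
       else w ⟨(i : ℕ) - m, by have := i.isLt; omega⟩ ⟨(j : ℕ) - n, by have := j.isLt; omega⟩)

end MatrixLevel

/-- The L2-operator norm of a rectangular complex scalar matrix. -/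
def cnorm {r m : ℕ} (a : Matrix (Fin r) (Fin m) ℂ) : ℝ := ‖a‖

/-- Embedding of a finite rectangular complex matrix into `𝔉`. -/
def embC {r m : ℕ} (a : Matrix (Fin r) (Fin m) ℂ) : FMat :=
  fun i j => if hi : i < r then (if hj : j < m then a ⟨i, hi⟩ ⟨j, hj⟩ else 0) else 0

/-- `e ⊕ ⋯ ⊕ e`: the diagonal matrix with constant diagonal `e`. -/
def diagE {V : Type*} [AddCommGroup V] (e : V) (n : ℕ) : Matrix (Fin n) (Fin n) V :=
  Matrix.of fun i j => if i = j then e else 0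

/-! ### Absolutely matrix ordered spaces and absolute matrix order unit spaces -/

/-- An absolutely matrix ordered space structure on a complex `*`-vector space `V`:
matrix cones `Mₙ(V)⁺` and absolute values `|·|_{m,n} : M_{m,n}(V) → Mₙ(V)⁺`
(Definition 4.1 of Karn-Kumar). -/
structure AMOS (V : Type*) [AddCommGroup V] [Module ℂ V] [StarAddMonoid V]
    [StarModule ℂ V] where
  pos : ∀ n : ℕ, Set (Matrix (Fin n) (Fin n) V)
  abs : ∀ m n : ℕ, Matrix (Fin m) (Fin n) V → Matrix (Fin n) (Fin n) V
  pos_star : ∀ n, ∀ v ∈ pos n, mstar v = v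
  pos_add : ∀ n, ∀ u ∈ pos n, ∀ v ∈ pos n, u + v ∈ pos n
  pos_conj : ∀ m n (a : Matrix (Fin n) (Fin m) ℂ), ∀ v ∈ pos n,
    aSmul a.conjTranspose (smulB v a) ∈ pos m
  abs_mem : ∀ m n v, abs m n v ∈ pos n
  abs_of_pos : ∀ n, ∀ v ∈ pos n, abs n n v = v
  abs_add_self : ∀ n (v : Matrix (Fin n) (Fin n) V), mstar v = v →
    abs n n v + v ∈ pos n ∧ abs n n v - v ∈ pos n
  abs_real_smul : ∀ n (k : ℝ) (v : Matrix (Fin n) (Fin n) V), mstar v = v →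
    abs n n ((k : ℂ) • v) = ((|k| : ℝ) : ℂ) • abs n n v
  absorb : ∀ n, ∀ u ∈ pos n, ∀ v ∈ pos n, ∀ w ∈ pos n,
    abs n n (u - v) = u + v → v - w ∈ pos n → abs n n (u - w) = u + w
  ortho_pm : ∀ n, ∀ u ∈ pos n, ∀ v ∈ pos n, ∀ w ∈ pos n,
    abs n n (u - v) = u + v → abs n n (u - w) = u + w →
    abs n n (u - abs n n (v + w)) = u + abs n n (v + w) ∧
      abs n n (u - abs n n (v - w)) = u + abs n n (v - w)
  abs_smul_le : ∀ (r m n s : ℕ) (α : Matrix (Fin r) (Fin m) ℂ)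
    (v : Matrix (Fin m) (Fin n) V) (β : Matrix (Fin n) (Fin s) ℂ),
    (cnorm α : ℂ) • abs n s (smulB (abs m n v) β) - abs r s (aSmul α (smulB v β)) ∈ pos s
  abs_dsum : ∀ (m n r s : ℕ) (v : Matrix (Fin m) (Fin n) V) (w : Matrix (Fin r) (Fin s) V),
    abs (m + r) (n + s) (dsum v w) = dsum (abs m n v) (abs r s w)

/-- A matrix order unit structure on top of an absolutely matrix ordered space:
an order unit `e` with `V⁺` proper and each `Mₙ(V)⁺` Archimedean. -/
structure AMOUS (V : Type*) [AddCommGroup V] [Module ℂ V] [StarAddMonoid V]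
    [StarModule ℂ V] extends AMOS V where
  e : V
  e_pos : diagE e 1 ∈ pos 1
  proper : ∀ v ∈ pos 1, -v ∈ pos 1 → v = 0
  arch : ∀ n (v : Matrix (Fin n) (Fin n) V), mstar v = v →
    (∀ k : ℝ, 0 < k → (k : ℂ) • diagE e n + v ∈ pos n) →
    v ∈ pos n
  unit : ∀ n (v : Matrix (Fin n) (Fin n) V), mstar v = v →
    ∃ k : ℝ, 0 < k ∧ (k : ℂ) • diagE e n - v ∈ pos n ∧
      (k : ℂ) • diagE e n + v ∈ pos n

namespace AMOUS

variable {V : Type*} [AddCommGroup V] [Module ℂ V] [StarAddMonoid V] [StarModule ℂ V]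
variable (A : AMOUS V)

/-- `eⁿ = e ⊕ ⋯ ⊕ e ∈ Mₙ(V)`. -/
def eN (n : ℕ) : Matrix (Fin n) (Fin n) V := diagE A.e n

/-- The `2n × 2n` matrix `[[a, b], [c, d]]` of `n × n` blocks. -/
def block2 {n : ℕ} (a b c d : Matrix (Fin n) (Fin n) V) :
    Matrix (Fin (n + n)) (Fin (n + n)) V :=
  fun i j =>
    if hi : (i : ℕ) < n then
      (if hj : (j : ℕ) < n then a ⟨i, hi⟩ ⟨j, hj⟩
       else b ⟨i, hi⟩ ⟨(j : ℕ) - n, by have := j.isLt; omega⟩)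
    else
      (if hj : (j : ℕ) < n then c ⟨(i : ℕ) - n, by have := i.isLt; omega⟩ ⟨j, hj⟩
       else d ⟨(i : ℕ) - n, by have := i.isLt; omega⟩ ⟨(j : ℕ) - n, by have := j.isLt; omega⟩)

end AMOUS
namespace AMOUS

variable {V : Type*} [AddCommGroup V] [Module ℂ V] [StarAddMonoid V] [StarModule ℂ V]
variable (A : AMOUS V)

/-- The matrix norms of a matrix order unit space:
`‖v‖ₙ = inf { k > 0 : [[k eⁿ, v], [v*, k eⁿ]] ∈ M₂ₙ(V)⁺ }`. -/
def mnorm (n : ℕ) (v : Matrix (Fin n) (Fin n) V) : ℝ :=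
  sInf {k : ℝ | 0 < k ∧
    block2 ((k : ℂ) • A.eN n) v (mstar v) ((k : ℂ) • A.eN n) ∈ A.pos (n + n)}

/-- Orthogonality `u ⊥ v` (for positive elements): `|u − v| = u + v`. -/
def Perp {n : ℕ} (u v : Matrix (Fin n) (Fin n) V) : Prop :=
  A.abs n n (u - v) = u + v

/-- `u ⊥_∞ v`: `‖k₁ u + k₂ v‖ = max {‖k₁ u‖, ‖k₂ v‖}` for all real `k₁, k₂`. -/
def PerpInfM {n : ℕ} (u v : Matrix (Fin n) (Fin n) V) : Prop :=
  ∀ k₁ k₂ : ℝ, A.mnorm n ((k₁ : ℂ) • u + (k₂ : ℂ) • v) =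
    max (A.mnorm n ((k₁ : ℂ) • u)) (A.mnorm n ((k₂ : ℂ) • v))

/-- `u ⊥_∞^a v`: absolute `∞`-orthogonality. -/
def PerpInfA {n : ℕ} (u v : Matrix (Fin n) (Fin n) V) : Prop :=
  ∀ u₁ ∈ A.pos n, ∀ v₁ ∈ A.pos n, u - u₁ ∈ A.pos n → v - v₁ ∈ A.pos n → A.PerpInfM u₁ v₁

/-- `(V, {Mₙ(V)⁺}, {|·|}, e)` is an absolute matrix order unit space:
`⊥ = ⊥_∞^a` on each `Mₙ(V)⁺`. -/
def IsAbsolute : Prop :=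
  ∀ n, ∀ u ∈ A.pos n, ∀ v ∈ A.pos n, (A.Perp u v ↔ A.PerpInfA u v)

/-- `p` is an order projection in `Mₙ(V)`: `p* = p` and `|2p − eⁿ| = eⁿ`. -/
def IsOP (n : ℕ) (p : Matrix (Fin n) (Fin n) V) : Prop :=
  mstar p = p ∧ A.abs n n ((2 : ℂ) • p - A.eN n) = A.eN n

/-- `v ∈ M_{m,n}(V)` is a partial isometry: `|v|` and `|v*|` are order projections. -/
def IsPI {m n : ℕ} (v : Matrix (Fin m) (Fin n) V) : Prop :=
  A.IsOP n (A.abs m n v) ∧ A.IsOP m (A.abs n m (mstar v))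

end AMOUS

/-- An element of `M_∞(V)`: a matrix at some level `n`. -/
def OPE (V : Type*) : Type _ := Σ n : ℕ, Matrix (Fin n) (Fin n) V

namespace OPE

variable {V : Type*} [AddCommGroup V] [Module ℂ V] [StarAddMonoid V] [StarModule ℂ V]

/-- Direct sum in `M_∞(V)`. -/
def d (p q : OPE V) : OPE V := ⟨p.1 + q.1, dsum p.2 q.2⟩

/-- The zero order projection (at level 1). -/
def zero (V : Type*) [AddCommGroup V] : OPE V := ⟨1, 0⟩

end OPE

namespace AMOUS

variable {V : Type*} [AddCommGroup V] [Module ℂ V] [StarAddMonoid V] [StarModule ℂ V]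
variable (A : AMOUS V)

/-- Membership in `𝒪𝒫_∞(V)`. -/
def IsOPE (p : OPE V) : Prop := A.IsOP p.1 p.2

/-- `eⁿ` as an element of `𝒪𝒫_∞(V)`. -/
def eOPE (n : ℕ) : OPE V := ⟨n, A.eN n⟩

/-- Partial isometric equivalence `p ∼ q` of order projections: there is a partial
isometry `v` with `p = |v*|` and `q = |v|`. -/
def Sim (p q : OPE V) : Prop :=
  ∃ v : Matrix (Fin p.1) (Fin q.1) V,
    A.IsPI v ∧ p.2 = A.abs q.1 p.1 (mstar v) ∧ q.2 = A.abs p.1 q.1 v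

/-- Condition (T). -/
def CondT : Prop :=
  ∀ (m n l : ℕ) (u : Matrix (Fin m) (Fin n) V) (v : Matrix (Fin l) (Fin n) V),
    A.IsPI u → A.IsPI v → A.abs m n u = A.abs l n v →
    ∃ w : Matrix (Fin m) (Fin l) V, A.IsPI w ∧
      A.abs l m (mstar w) = A.abs n m (mstar u) ∧ A.abs m l w = A.abs n l (mstar v)

/-- Stabilized equivalence `p ≈ q`: `p ⊕ r ∼ q ⊕ r` for some order projection `r`. -/
def ASim (p q : OPE V) : Prop := ∃ r : OPE V, A.IsOPE r ∧ A.Sim (p.d r) (q.d r)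

/-- A pair of order projections, representing an element `[(p,q)]` of `K₀(V)`. -/
def IsOPPair (x : OPE V × OPE V) : Prop := A.IsOPE x.1 ∧ A.IsOPE x.2

/-- The relation `(p₁,q₁) ≡ (p₂,q₂) ↔ p₁ ⊕ q₂ ≈ p₂ ⊕ q₁` defining `K₀(V)`. -/
def Krel (x y : OPE V × OPE V) : Prop := A.ASim (x.1.d y.2) (y.1.d x.2)

/-- Addition of representatives of `K₀(V)` classes. -/
def kadd (x y : OPE V × OPE V) : OPE V × OPE V := (x.1.d y.1, x.2.d y.2)

/-- The representative of the zero class of `K₀(V)`. -/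
def kzero : OPE V × OPE V := (OPE.zero V, OPE.zero V)

/-- Representative-level membership in the cone `K₀(V)⁺ = {[(p,0)] : p ∈ 𝒪𝒫_∞(V)}`. -/
def KPos (x : OPE V × OPE V) : Prop :=
  ∃ p : OPE V, A.IsOPE p ∧ A.Krel x (p, OPE.zero V)

/-- Representative-level order `[x] ≤ [y]` in `K₀(V)`: `[y] − [x] ∈ K₀(V)⁺`. -/
def Kle (x y : OPE V × OPE V) : Prop :=
  ∃ r : OPE V, A.IsOPE r ∧ A.Krel (kadd x (r, OPE.zero V)) y

/-- The order projection `p ∈ Mₙ(V)` is finite: `q ∼ p` and `q ≥ p` imply `q = p`. -/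
def FiniteOP (n : ℕ) (p : Matrix (Fin n) (Fin n) V) : Prop :=
  ∀ q : Matrix (Fin n) (Fin n) V, A.IsOP n q → A.Sim ⟨n, q⟩ ⟨n, p⟩ →
    q - p ∈ A.pos n → q = p

end AMOUS

/-! ### Maps between absolute matrix order unit spaces -/

section Maps

variable {V W : Type*} [AddCommGroup V] [Module ℂ V] [StarAddMonoid V] [StarModule ℂ V]
  [AddCommGroup W] [Module ℂ W] [StarAddMonoid W] [StarModule ℂ W]

/-- The amplification `φₙ` (entrywise application) of a map. -/
def mmap (φ : V →ₗ[ℂ] W) {m n : ℕ} (v : Matrix (Fin m) (Fin n) V) :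
    Matrix (Fin m) (Fin n) W :=
  fun i j => φ (v i j)

/-- `φ` is completely `|·|`-preserving: every amplification `φₙ` is `|·|`-preserving. -/
def CAbsPres (A : AMOUS V) (B : AMOUS W) (φ : V →ₗ[ℂ] W) : Prop :=
  ∀ (n : ℕ) (v : Matrix (Fin n) (Fin n) V), B.abs n n (mmap φ v) = mmap φ (A.abs n n v)

/-- `φ` and `ψ` are completely orthogonal: `φₙ(u) ⊥ ψₙ(v)` for all positive `u, v`. -/
def COrth (A : AMOUS V) (B : AMOUS W) (φ ψ : V →ₗ[ℂ] W) : Prop :=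
  ∀ (n : ℕ) (u v : Matrix (Fin n) (Fin n) V), u ∈ A.pos n → v ∈ A.pos n →
    B.Perp (mmap φ u) (mmap ψ v)

/-- The image of an element of `M_∞(V)` under (the amplifications of) `φ`. -/
def mmapOPE (φ : V →ₗ[ℂ] W) (p : OPE V) : OPE W := ⟨p.1, mmap φ p.2⟩

/-- `F` represents a group homomorphism `K₀(V) → K₀(W)` making the `K₀` diagram of `φ`
commute: it maps `K₀`-representatives to `K₀`-representatives, respects the defining
relation `≡`, is additive, and satisfies `F([(p, 0)]) = [(φ(p), 0)]`. -/
def K0HomProp (A : AMOUS V) (B : AMOUS W) (φ : V →ₗ[ℂ] W)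
    (F : OPE V × OPE V → OPE W × OPE W) : Prop :=
  (∀ x, A.IsOPPair x → B.IsOPPair (F x)) ∧
  (∀ x y, A.IsOPPair x → A.IsOPPair y → A.Krel x y → B.Krel (F x) (F y)) ∧
  (∀ x y, A.IsOPPair x → A.IsOPPair y → B.Krel (F (AMOUS.kadd x y)) (AMOUS.kadd (F x) (F y))) ∧
  (∀ p : OPE V, A.IsOPE p → B.Krel (F (p, OPE.zero V)) (mmapOPE φ p, OPE.zero W))

/-- The completely bounded norm of `φ` with respect to the order unit matrix norms. -/
def cbNorm (A : AMOUS V) (B : AMOUS W) (φ : V →ₗ[ℂ] W) : ℝ :=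
  ⨆ n : ℕ, sInf {c : ℝ | 0 ≤ c ∧
    ∀ v : Matrix (Fin n) (Fin n) V, B.mnorm n (mmap φ v) ≤ c * A.mnorm n v}

end Maps

/-!
For self-adjoint `v` write `v = v⁺ - v⁻` with `v^± = (|v| ± v) / 2` positive and `v⁺ ⊥ v⁻`.
Maps preserving `|·|` preserve `⊥`, and `φ ⊥ ψ` supplies the cross relations, so the axiom
`ortho_pm` gives `(φ + ψ)(v⁺) ⊥ (φ + ψ)(v⁻)`, which is `|(φ + ψ)(v)| = (φ + ψ)(|v|)`.
A general `v` is reduced to the self-adjoint `[0 v; v* 0]`, whose absolute value is `|v*| ⊕ |v|`: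
it is a row permutation of `v* ⊕ v`, and `|·|` is invariant under permutation matrices because
they have norm one.
-/

section MatrixLevel

variable {V : Type*} [AddCommGroup V]

theorem mstar_sub [StarAddMonoid V] {m n : ℕ} (u v : Matrix (Fin m) (Fin n) V) :
    mstar (u - v) = mstar u - mstar v := by
  funext i j
  simp [mstar, star_sub]

theorem mstar_block2_zero [StarAddMonoid V] {n : ℕ} (v : Matrix (Fin n) (Fin n) V) :
    mstar (AMOUS.block2 0 v (mstar v) 0) = AMOUS.block2 0 v (mstar v) 0 := by
  funext i j
  simp only [mstar, AMOUS.block2]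
  split_ifs <;> simp

theorem aSmul_permMatrix [Module ℂ V] {m n : ℕ} (σ : Equiv.Perm (Fin m))
    (w : Matrix (Fin m) (Fin n) V) : aSmul (σ.permMatrix ℂ) w = w.submatrix σ id := by
  funext i j
  simp [aSmul, PEquiv.toMatrix_apply, ite_smul]

theorem smulB_one [Module ℂ V] {m n : ℕ} (w : Matrix (Fin m) (Fin n) V) :
    smulB w 1 = w := by
  funext i j
  simp [smulB, Matrix.one_apply, ite_smul]

theorem block2_zero_eq_submatrix_dsum [StarAddMonoid V] {n : ℕ} (v : Matrix (Fin n) (Fin n) V) :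
    AMOUS.block2 0 v (mstar v) 0 = (dsum (mstar v) v).submatrix finAddFlip id := by
  funext ⟨i, hi⟩ ⟨j, hj⟩
  simp only [AMOUS.block2, dsum, Matrix.submatrix_apply, id]
  by_cases hin : i < n
  · rw [finAddFlip_apply_mk_left hin]
    simp [hin]
  · rw [finAddFlip_apply_mk_right (not_lt.mp hin)]
    simp [hin, show i - n < n by omega]

theorem dsum_natAdd_natAdd {m n r s : ℕ} (x : Matrix (Fin m) (Fin n) V)
    (y : Matrix (Fin r) (Fin s) V) (i : Fin r) (j : Fin s) :
    dsum x y (Fin.natAdd m i) (Fin.natAdd n j) = y i j := by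
  simp [dsum]

theorem right_eq_of_dsum_eq {m n r s : ℕ} {x x' : Matrix (Fin m) (Fin n) V}
    {y y' : Matrix (Fin r) (Fin s) V} (h : dsum x y = dsum x' y') : y = y' := by
  funext i j
  simpa only [dsum_natAdd_natAdd] using congrFun (congrFun h (Fin.natAdd m i)) (Fin.natAdd n j)

end MatrixLevel

namespace AMOS

variable {V : Type*} [AddCommGroup V] [Module ℂ V] [StarAddMonoid V] [StarModule ℂ V]
  (A : AMOS V)

theorem abs_neg {n : ℕ} {v : Matrix (Fin n) (Fin n) V} (hv : mstar v = v) :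
    A.abs n n (-v) = A.abs n n v := by
  simpa using A.abs_real_smul n (-1) v hv

theorem eq_zero_of_mem_pos_of_neg_mem_pos {n : ℕ} {w : Matrix (Fin n) (Fin n) V}
    (hw : w ∈ A.pos n) (hw' : -w ∈ A.pos n) : w = 0 := by
  have : -w = w := by
    rw [← A.abs_of_pos n _ hw', A.abs_neg (A.pos_star n w hw), A.abs_of_pos n w hw]
  have h2 : (2 : ℂ) • w = 0 := by
    rw [two_smul]
    nth_rw 1 [← this]
    exact neg_add_cancel w
  exact (smul_eq_zero.mp h2).resolve_left two_ne_zero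

theorem real_smul_mem_pos {n : ℕ} {k : ℝ} (hk : 0 ≤ k) {w : Matrix (Fin n) (Fin n) V}
    (hw : w ∈ A.pos n) : (k : ℂ) • w ∈ A.pos n := by
  have h := A.abs_mem n n ((k : ℂ) • w)
  rwa [A.abs_real_smul n k w (A.pos_star n w hw), A.abs_of_pos n w hw, abs_of_nonneg hk] at h

theorem abs_sub_abs_submatrix_mem_pos {m k : ℕ} [Nonempty (Fin m)] (σ : Equiv.Perm (Fin m))
    (w : Matrix (Fin m) (Fin k) V) : A.abs m k w - A.abs m k (w.submatrix σ id) ∈ A.pos k := by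
  have h := A.abs_smul_le m m k k (σ.permMatrix ℂ) w 1
  rwa [smulB_one, smulB_one, A.abs_of_pos k _ (A.abs_mem m k w), aSmul_permMatrix, cnorm,
    Matrix.permMatrix_l2_opNorm_eq, Complex.ofReal_one, one_smul] at h

theorem abs_submatrix_perm {m k : ℕ} (σ : Equiv.Perm (Fin m)) (w : Matrix (Fin m) (Fin k) V) :
    A.abs m k (w.submatrix σ id) = A.abs m k w := by
  rcases isEmpty_or_nonempty (Fin m) with hm | hm
  · rw [Subsingleton.elim (w.submatrix σ id) w]
  have h := A.abs_sub_abs_submatrix_mem_pos σ⁻¹ (w.submatrix σ id)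
  rw [Matrix.submatrix_submatrix, Function.id_comp, Equiv.Perm.coe_inv, Equiv.self_comp_symm,
    Matrix.submatrix_id_id] at h
  rw [← sub_eq_zero]
  refine A.eq_zero_of_mem_pos_of_neg_mem_pos h ?_
  rw [neg_sub]
  exact A.abs_sub_abs_submatrix_mem_pos σ w

theorem abs_block2_zero {n : ℕ} (v : Matrix (Fin n) (Fin n) V) :
    A.abs (n + n) (n + n) (AMOUS.block2 0 v (mstar v) 0)
      = dsum (A.abs n n (mstar v)) (A.abs n n v) := by
  rw [block2_zero_eq_submatrix_dsum, A.abs_submatrix_perm finAddFlip, A.abs_dsum]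

end AMOS

namespace AMOUS

variable {V : Type*} [AddCommGroup V] [Module ℂ V] [StarAddMonoid V] [StarModule ℂ V]
  {A : AMOUS V} {n : ℕ} {u v w : Matrix (Fin n) (Fin n) V}

theorem Perp.symm (hu : mstar u = u) (hv : mstar v = v) (h : A.Perp u v) : A.Perp v u := by
  have hsa : mstar (u - v) = u - v := by rw [mstar_sub, hu, hv]
  unfold Perp at h ⊢
  rw [← neg_sub, A.abs_neg hsa, h, add_comm]

theorem Perp.add_right (hu : u ∈ A.pos n) (hv : v ∈ A.pos n) (hw : w ∈ A.pos n)
    (huv : A.Perp u v) (huw : A.Perp u w) : A.Perp u (v + w) := by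
  have h := (A.ortho_pm n u hu v hv w hw huv huw).1
  rwa [A.abs_of_pos n (v + w) (A.pos_add n v hv w hw)] at h

theorem Perp.add_add {a b c d : Matrix (Fin n) (Fin n) V} (ha : a ∈ A.pos n)
    (hb : b ∈ A.pos n) (hc : c ∈ A.pos n) (hd : d ∈ A.pos n) (hac : A.Perp a c)
    (had : A.Perp a d) (hbc : A.Perp b c) (hbd : A.Perp b d) : A.Perp (a + b) (c + d) := by
  have hcd := A.pos_add n c hc d hd
  have sa : ∀ x ∈ A.pos n, mstar x = x := A.pos_star n
  have hacd := Perp.add_right ha hc hd hac had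
  have hbcd := Perp.add_right hb hc hd hbc hbd
  exact (Perp.add_right hcd ha hb (hacd.symm (sa a ha) (sa _ hcd))
    (hbcd.symm (sa b hb) (sa _ hcd))).symm (sa _ hcd) (sa _ (A.pos_add n a ha b hb))

end AMOUS

section Maps

variable {V W : Type*} [AddCommGroup V] [Module ℂ V] [AddCommGroup W] [Module ℂ W]

theorem mmap_add (φ : V →ₗ[ℂ] W) {m n : ℕ} (u v : Matrix (Fin m) (Fin n) V) :
    mmap φ (u + v) = mmap φ u + mmap φ v := by
  funext i j
  simp [mmap]

theorem mmap_sub (φ : V →ₗ[ℂ] W) {m n : ℕ} (u v : Matrix (Fin m) (Fin n) V) :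
    mmap φ (u - v) = mmap φ u - mmap φ v := by
  funext i j
  simp [mmap]

theorem mmap_add_map (φ ψ : V →ₗ[ℂ] W) {m n : ℕ} (v : Matrix (Fin m) (Fin n) V) :
    mmap (φ + ψ) v = mmap φ v + mmap ψ v := rfl

theorem mmap_dsum (φ : V →ₗ[ℂ] W) {m n r s : ℕ} (u : Matrix (Fin m) (Fin n) V)
    (w : Matrix (Fin r) (Fin s) V) : mmap φ (dsum u w) = dsum (mmap φ u) (mmap φ w) := by
  funext i j
  simp only [mmap, dsum]
  split_ifs <;> simp

theorem mmap_mstar [StarAddMonoid V] [StarAddMonoid W] (φ : V →ₗ[ℂ] W)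
    (hφ : ∀ v : V, φ (star v) = star (φ v)) {m n : ℕ} (v : Matrix (Fin m) (Fin n) V) :
    mmap φ (mstar v) = mstar (mmap φ v) := by
  funext i j
  simp [mmap, mstar, hφ]

theorem mmap_block2_zero (φ : V →ₗ[ℂ] W) {n : ℕ} (u w : Matrix (Fin n) (Fin n) V) :
    mmap φ (AMOUS.block2 0 u w 0) = AMOUS.block2 0 (mmap φ u) (mmap φ w) 0 := by
  funext i j
  simp only [mmap, AMOUS.block2]
  split_ifs <;> simp

variable [StarAddMonoid V] [StarModule ℂ V] [StarAddMonoid W] [StarModule ℂ W]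
  {A : AMOUS V} {B : AMOUS W} {φ ψ : V →ₗ[ℂ] W}

theorem CAbsPres.mmap_mem_pos (hφ : CAbsPres A B φ) {n : ℕ} {u : Matrix (Fin n) (Fin n) V}
    (hu : u ∈ A.pos n) : mmap φ u ∈ B.pos n := by
  have h := B.abs_mem n n (mmap φ u)
  rwa [hφ n u, A.abs_of_pos n u hu] at h

theorem CAbsPres.perp (hφ : CAbsPres A B φ) {n : ℕ} {u v : Matrix (Fin n) (Fin n) V}
    (h : A.Perp u v) : B.Perp (mmap φ u) (mmap φ v) := by
  unfold AMOUS.Perp at h ⊢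
  rw [← mmap_sub, hφ, h, mmap_add]

theorem CAbsPres.abs_mmap_add_of_mstar_eq_self (hφ : CAbsPres A B φ) (hψ : CAbsPres A B ψ)
    (horth : COrth A B φ ψ) {n : ℕ} {v : Matrix (Fin n) (Fin n) V} (hv : mstar v = v) :
    B.abs n n (mmap (φ + ψ) v) = mmap (φ + ψ) (A.abs n n v) := by
  set p : Matrix (Fin n) (Fin n) V := ((1 / 2 : ℝ) : ℂ) • (A.abs n n v + v)
  set q : Matrix (Fin n) (Fin n) V := ((1 / 2 : ℝ) : ℂ) • (A.abs n n v - v)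
  have hp : p ∈ A.pos n := A.real_smul_mem_pos (by norm_num) (A.abs_add_self n v hv).1
  have hq : q ∈ A.pos n := A.real_smul_mem_pos (by norm_num) (A.abs_add_self n v hv).2
  have hsub : p - q = v := by simp only [p, q]; push_cast; module
  have hadd : p + q = A.abs n n v := by simp only [p, q]; push_cast; module
  have hpq : A.Perp p q := by unfold AMOUS.Perp; rw [hsub, hadd]
  have hqp : B.Perp (mmap φ q) (mmap ψ p) := horth n q p hq hp
  have key : B.Perp (mmap φ p + mmap ψ p) (mmap φ q + mmap ψ q) :=
    AMOUS.Perp.add_add (hφ.mmap_mem_pos hp) (hψ.mmap_mem_pos hp) (hφ.mmap_mem_pos hq)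
      (hψ.mmap_mem_pos hq) (hφ.perp hpq) (horth n p q hp hq)
      (hqp.symm (B.pos_star n _ (hφ.mmap_mem_pos hq)) (B.pos_star n _ (hψ.mmap_mem_pos hp)))
      (hψ.perp hpq)
  unfold AMOUS.Perp at key
  rwa [← mmap_add_map, ← mmap_add_map, ← mmap_sub, ← mmap_add, hsub, hadd] at key

end Maps

theorem statement18_general {V W : Type*} [AddCommGroup V] [Module ℂ V] [StarAddMonoid V] [StarModule ℂ V]
    [AddCommGroup W] [Module ℂ W] [StarAddMonoid W] [StarModule ℂ W] (A : AMOUS V) (B : AMOUS W)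
    (φ ψ : V →ₗ[ℂ] W)
    (hφstar : ∀ v : V, φ (star v) = star (φ v))
    (hψstar : ∀ v : V, ψ (star v) = star (ψ v))
    (hφ : CAbsPres A B φ) (hψ : CAbsPres A B ψ) (horth : COrth A B φ ψ) :
    CAbsPres A B (φ + ψ) := by
  intro n v
  have hstar : ∀ x : V, (φ + ψ) (star x) = star ((φ + ψ) x) := fun x => by
    simp [hφstar, hψstar]
  have h := hφ.abs_mmap_add_of_mstar_eq_self hψ horth (mstar_block2_zero v)
  rw [mmap_block2_zero, mmap_mstar _ hstar, A.abs_block2_zero, B.abs_block2_zero,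
    mmap_dsum] at h
  exact right_eq_of_dsum_eq h

/-- The sum of two completely orthogonal completely `|·|`-preserving
maps is completely `|·|`-preserving. -/
theorem statement18 {V W : Type*} [AddCommGroup V] [Module ℂ V] [StarAddMonoid V] [StarModule ℂ V]
    [AddCommGroup W] [Module ℂ W] [StarAddMonoid W] [StarModule ℂ W] (A : AMOUS V) (B : AMOUS W)
    (hAabs : A.IsAbsolute) (hBabs : B.IsAbsolute)
    (φ ψ : V →ₗ[ℂ] W)
    (hφstar : ∀ v : V, φ (star v) = star (φ v))
    (hψstar : ∀ v : V, ψ (star v) = star (ψ v))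
    (hφ : CAbsPres A B φ) (hψ : CAbsPres A B ψ) (horth : COrth A B φ ψ) :
    CAbsPres A B (φ + ψ) :=
  statement18_general A B φ ψ hφstar hψstar hφ hψ horth
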